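/- arXiv:1011.1082 — 2 statements merged into one kernel-verified Lean document; each statement's English description precedes it below -/
import Mathlib

section
/- General lower bound criterion: let {P_n} be a sequence of probability measures on a Polish space X, X° ⊂ X, and suppose for each x ∈ X° there is a sequence of probability measures {Q_n^x} converging weakly to δ_x with limsup_n (1/n) Ent(Q_n^x | P_n) ≤ I°(x) for some I° : X° → [0,+∞]. Then for every open set O ⊂ X, liminf_n (1/n) log P_n(O) ≥ − inf_{x ∈ O ∩ X°} I°(x). -/
open MeasureTheory Filter Set
open scoped ENNReal BoundedContinuousFunction Topology

/-! For `x ∈ O ∩ X°`, the entropy inequality `Q(O) · (-log P(O)) ≤ Ent(Q|P) + log 2` applied to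
`Q = Qₙˣ`, `P = Pₙ` bounds `-(1/n) log Pₙ(O)` by `((1/n) Ent(Qₙˣ|Pₙ) + (log 2)/n) / Qₙˣ(O)`.
By the portmanteau theorem `Qₙˣ(O) → 1`, so the limsup of `-(1/n) log Pₙ(O)` is at most `I°(x)`. -/

section KullbackLeibler

variable {α : Type*} [MeasurableSpace α] {μ ν : Measure α} [IsProbabilityMeasure μ]
  [IsProbabilityMeasure ν]

lemma integral_sub_log_integral_exp_le_integral_llr (hμν : μ ≪ ν)
    (h_int : Integrable (llr μ ν) μ) {f : α → ℝ} (hfμ : Integrable f μ)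
    (hfν : Integrable (fun x ↦ Real.exp (f x)) ν) :
    ∫ x, f x ∂μ - Real.log (∫ x, Real.exp (f x) ∂ν) ≤ ∫ x, llr μ ν x ∂μ := by
  have := isProbabilityMeasure_tilted hfν
  have gibbs := InformationTheory.integral_llr_add_sub_measure_univ_nonneg
    (hμν.trans (absolutelyContinuous_tilted hfν)) (integrable_llr_tilted_right hμν hfμ h_int hfν)
  rw [integral_llr_tilted_right hμν hfμ hfν h_int] at gibbs
  simp only [probReal_univ] at gibbs
  linarith

lemma measureReal_mul_neg_log_le_integral_llr_add_log_two (hμν : μ ≪ ν)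
    (h_int : Integrable (llr μ ν) μ) {A : Set α} (hA : MeasurableSet A) :
    μ.real A * -Real.log (ν.real A) ≤ ∫ x, llr μ ν x ∂μ + Real.log 2 := by
  -- Donsker–Varadhan with `f = t • 1_A`, `t = -log ν(A)`, for which `∫ exp f dν ≤ 2`.
  set t := -Real.log (ν.real A)
  have hexp : (fun x ↦ Real.exp (A.indicator (fun _ ↦ t) x))
      = fun x ↦ A.indicator (fun _ ↦ Real.exp t - 1) x + 1 := by
    funext x; by_cases hx : x ∈ A <;> simp [hx]
  have hfν : Integrable (fun x ↦ Real.exp (A.indicator (fun _ ↦ t) x)) ν := by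
    rw [hexp]; exact ((integrable_const _).indicator hA).add (integrable_const 1)
  have hνA : ν.real A * Real.exp t ≤ 1 := by
    rcases measureReal_nonneg.eq_or_lt with h0 | hpos
    · rw [← h0, zero_mul]; exact zero_le_one
    · rw [Real.exp_neg, Real.exp_log hpos, mul_inv_cancel₀ hpos.ne']
  have hZ : ∫ x, Real.exp (A.indicator (fun _ ↦ t) x) ∂ν ≤ 2 := by
    rw [hexp, integral_add ((integrable_const _).indicator hA) (integrable_const 1),
      integral_indicator_const _ hA, integral_const, probReal_univ]
    simp only [smul_eq_mul, mul_one]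
    nlinarith [measureReal_nonneg (μ := ν) (s := A)]
  have hDV := integral_sub_log_integral_exp_le_integral_llr hμν h_int
    ((integrable_const t).indicator hA) hfν
  rw [integral_indicator_const _ hA, smul_eq_mul] at hDV
  have := Real.log_le_log (integral_exp_pos hfν) hZ
  linarith

end KullbackLeibler

lemma ENNReal.limsup_le_limsup_of_mul_le {ι : Type*} {L : Filter ι} {u v w : ι → ℝ≥0∞}
    (hv : 1 ≤ liminf v L) (h : ∀ᶠ i in L, u i * v i ≤ w i) : limsup u L ≤ limsup w L :=
  calc limsup u L ≤ limsup u L * liminf v L := le_mul_of_one_le_right' hv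
    _ ≤ limsup (u * v) L := ENNReal.le_limsup_mul
    _ ≤ limsup w L := limsup_le_limsup h

lemma EReal.neg_coe_le_liminf_of_limsup_ofReal_neg_le {ι : Type*} {L : Filter ι} [L.NeBot]
    {u : ι → ℝ} {a : ℝ≥0∞} (h : limsup (fun i ↦ ENNReal.ofReal (-u i)) L ≤ a) :
    -(a : EReal) ≤ liminf (fun i ↦ (u i : EReal)) L := by
  have hcoe : ((limsup (fun i ↦ ENNReal.ofReal (-u i)) L : ℝ≥0∞) : EReal)
      = limsup (fun i ↦ ((ENNReal.ofReal (-u i) : ℝ≥0∞) : EReal)) L :=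
    Monotone.map_limsup_of_continuousAt (fun _ _ ↦ EReal.coe_ennreal_le_coe_ennreal_iff.2) _
      continuous_coe_ennreal_ereal.continuousAt
  calc -(a : EReal) ≤ -limsup (fun i ↦ ((ENNReal.ofReal (-u i) : ℝ≥0∞) : EReal)) L := by
        rw [← hcoe]; exact EReal.neg_le_neg_iff.2 (EReal.coe_ennreal_le_coe_ennreal_iff.2 h)
    _ = liminf (fun i ↦ -((ENNReal.ofReal (-u i) : ℝ≥0∞) : EReal)) L := (EReal.liminf_neg ..).symm
    _ ≤ liminf (fun i ↦ (u i : EReal)) L := by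
      refine liminf_le_liminf (.of_forall fun i ↦ ?_)
      rw [EReal.coe_ennreal_ofReal, ← EReal.coe_neg, EReal.coe_le_coe_iff]
      linarith [le_max_left (-u i) 0]

lemma limsup_ofReal_neg_log_measureReal_le {α : Type*} [MeasurableSpace α]
    {P Q : ℕ → Measure α} [∀ n, IsProbabilityMeasure (P n)] [∀ n, IsProbabilityMeasure (Q n)]
    (hQP : ∀ n, Q n ≪ P n) (h_int : ∀ n, Integrable (llr (Q n) (P n)) (Q n))
    {A : Set α} (hA : MeasurableSet A) (hQA : 1 ≤ liminf (fun n ↦ Q n A) atTop) :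
    limsup (fun n : ℕ ↦ ENNReal.ofReal (-(1 / n * Real.log ((P n).real A)))) atTop
      ≤ limsup (fun n : ℕ ↦ ENNReal.ofReal (1 / n * ∫ x, llr (Q n) (P n) x ∂Q n)) atTop := by
  have hlog2 : Tendsto (fun n : ℕ ↦ ENNReal.ofReal (Real.log 2 / n)) atTop (𝓝 0) := by
    simpa using ENNReal.tendsto_ofReal (tendsto_const_div_atTop_nhds_zero_nat (Real.log 2))
  refine (ENNReal.limsup_le_limsup_of_mul_le hQA (.of_forall fun n ↦ ?_)).trans_eq
    (ENNReal.limsup_add_of_right_tendsto_zero hlog2 _)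
  rw [← ofReal_measureReal, ← ENNReal.ofReal_mul' measureReal_nonneg]
  refine (ENNReal.ofReal_le_ofReal ?_).trans ENNReal.ofReal_add_le
  calc -(1 / n * Real.log ((P n).real A)) * (Q n).real A
      = 1 / n * ((Q n).real A * -Real.log ((P n).real A)) := by ring
    _ ≤ 1 / n * (∫ x, llr (Q n) (P n) x ∂Q n + Real.log 2) := by
      gcongr
      exact measureReal_mul_neg_log_le_integral_llr_add_log_two (hQP n) (h_int n) hA
    _ = 1 / n * ∫ x, llr (Q n) (P n) x ∂Q n + Real.log 2 / n := by ring

lemma one_le_liminf_measure_of_tendsto_integral_dirac {Ω ι : Type*} [MeasurableSpace Ω]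
    [TopologicalSpace Ω] [OpensMeasurableSpace Ω] [HasOuterApproxClosed Ω] {L : Filter ι}
    {μs : ι → Measure Ω} [∀ i, IsProbabilityMeasure (μs i)] {x : Ω}
    (hμs : ∀ f : Ω →ᵇ ℝ, Tendsto (fun i ↦ ∫ ω, f ω ∂μs i) L (𝓝 (f x)))
    {G : Set Ω} (hG : IsOpen G) (hx : x ∈ G) :
    1 ≤ liminf (fun i ↦ μs i G) L := by
  have hlim : Tendsto (β := ProbabilityMeasure Ω) (fun i ↦ ⟨μs i, inferInstance⟩) L
      (𝓝 ⟨Measure.dirac x, inferInstance⟩) :=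
    ProbabilityMeasure.tendsto_iff_forall_integral_tendsto.2 fun f ↦ by
      simpa [integral_dirac' _ _ f.continuous.stronglyMeasurable] using hμs f
  simpa [hx] using ProbabilityMeasure.le_liminf_measure_open_of_tendsto hlim hG

theorem stmt16_general {X : Type*} [MetricSpace X] [MeasurableSpace X] [BorelSpace X]
    (P : ℕ → Measure X) (hP : ∀ n, IsProbabilityMeasure (P n))
    (X0 : Set X) (I : X → ℝ≥0∞)
    (h : ∀ x ∈ X0, ∃ Q : ℕ → Measure X,
      (∀ n, IsProbabilityMeasure (Q n)) ∧
      (∀ n, Q n ≪ P n) ∧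
      (∀ n, Integrable (fun ω => Real.log (((Q n).rnDeriv (P n) ω).toReal)) (Q n)) ∧
      (∀ f : X →ᵇ ℝ, Tendsto (fun n => ∫ y, f y ∂(Q n)) atTop (nhds (f x))) ∧
      limsup (fun n : ℕ => ENNReal.ofReal
          ((1 / (n : ℝ)) *
            ∫ ω, Real.log (((Q n).rnDeriv (P n) ω).toReal) ∂(Q n))) atTop ≤ I x) :
    ∀ O : Set X, IsOpen O → ∀ x ∈ O ∩ X0,
      (-(I x : EReal)) ≤
        liminf (fun n : ℕ =>
          (((1 / (n : ℝ)) * Real.log ((P n O).toReal) : ℝ) : EReal)) atTop := by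
  intro O hO x hx
  obtain ⟨Q, hQ, hQP, h_int, hweak, hI⟩ := h x hx.2
  have := hP
  have := hQ
  have hQO := one_le_liminf_measure_of_tendsto_integral_dirac hweak hO hx.1
  exact EReal.neg_coe_le_liminf_of_limsup_ofReal_neg_le
    ((limsup_ofReal_neg_log_measureReal_le hQP h_int hO.measurableSet hQO).trans hI)

theorem stmt16 {X : Type*} [MetricSpace X] [CompleteSpace X]
    [TopologicalSpace.SeparableSpace X] [MeasurableSpace X] [BorelSpace X]
    (P : ℕ → Measure X) (hP : ∀ n, IsProbabilityMeasure (P n))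
    (X0 : Set X) (I : X → ℝ≥0∞)
    (h : ∀ x ∈ X0, ∃ Q : ℕ → Measure X,
      (∀ n, IsProbabilityMeasure (Q n)) ∧
      (∀ n, Q n ≪ P n) ∧
      (∀ n, Integrable (fun ω => Real.log (((Q n).rnDeriv (P n) ω).toReal)) (Q n)) ∧
      (∀ f : X →ᵇ ℝ, Tendsto (fun n => ∫ y, f y ∂(Q n)) atTop (nhds (f x))) ∧
      limsup (fun n : ℕ => ENNReal.ofReal
          ((1 / (n : ℝ)) *
            ∫ ω, Real.log (((Q n).rnDeriv (P n) ω).toReal) ∂(Q n))) atTop ≤ I x) :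
    ∀ O : Set X, IsOpen O → ∀ x ∈ O ∩ X0,
      (-(I x : EReal)) ≤
        liminf (fun n : ℕ =>
          (((1 / (n : ℝ)) * Real.log ((P n O).toReal) : ℝ) : EReal)) atTop :=
  stmt16_general P hP X0 I h
end

section
/- Entropy lower bound for events: for probability measures Q ≪ P on a measurable space and a measurable set A with Q(A) ≥ 1/2, one has log P(A) ≥ −(Ent(Q|P) + log 2)/Q(A). In particular, if Q(A) → 1 along a sequence, then liminf (1/n) log P_n(A_n) ≥ −limsup (1/n)Ent(Q_n|P_n). -/
open MeasureTheory Filter Set Topology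

/-! Gibbs' inequality for the restrictions of `Q` and `P` to `A` and to `Aᶜ` gives
`Ent(Q|P) ≥ Q(A) log (Q(A) / P(A)) + Q(Aᶜ) log (Q(Aᶜ) / P(Aᶜ))`. Since `P(Aᶜ) ≤ 1` and the
binary entropy of `Q(A)` is at most `log 2`, this leaves `Ent(Q|P) ≥ -log 2 - Q(A) log P(A)`.
After division by `n`, the `log 2 / n` term vanishes and `Q_n(A_n) → 1`. -/

namespace MeasureTheory

variable {Ω : Type*} [MeasurableSpace Ω] {P Q : Measure Ω}

lemma Measure.rnDeriv_restrict_restrict [SigmaFinite P] [Q.HaveLebesgueDecomposition P]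
    (hQP : Q ≪ P) {S : Set Ω} (hS : MeasurableSet S) :
    (Q.restrict S).rnDeriv (P.restrict S) =ᵐ[P.restrict S] Q.rnDeriv P := by
  conv_lhs => rw [← Measure.withDensity_rnDeriv_eq Q P hQP, restrict_withDensity hS]
  exact Measure.rnDeriv_withDensity _ (Measure.measurable_rnDeriv Q P)

lemma llr_restrict_restrict [SigmaFinite P] [Q.HaveLebesgueDecomposition P] (hQP : Q ≪ P)
    {S : Set Ω} (hS : MeasurableSet S) :
    llr (Q.restrict S) (P.restrict S) =ᵐ[Q.restrict S] llr Q P := by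
  filter_upwards [(hQP.restrict S).ae_le (Measure.rnDeriv_restrict_restrict hQP hS)] with ω hω
  simp only [llr_def, hω]

lemma mul_log_div_le_setIntegral_llr [IsFiniteMeasure P] [IsFiniteMeasure Q] (hQP : Q ≪ P)
    (hint : Integrable (llr Q P) Q) {S : Set Ω} (hS : MeasurableSet S) :
    Q.real S * Real.log (Q.real S / P.real S) ≤ ∫ ω in S, llr Q P ω ∂Q := by
  have hllr := llr_restrict_restrict hQP hS
  have hint_S : Integrable (llr (Q.restrict S) (P.restrict S)) (Q.restrict S) :=
    (integrable_congr hllr).2 hint.restrict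
  have h := InformationTheory.mul_log_le_toReal_klDiv (hQP.restrict S) hint_S
  rw [InformationTheory.toReal_klDiv (hQP.restrict S) hint_S, integral_congr_ae hllr] at h
  simpa [measureReal_restrict_apply_univ] using h

lemma mul_log_div_add_mul_log_div_compl_le_integral_llr [IsFiniteMeasure P] [IsFiniteMeasure Q]
    (hQP : Q ≪ P) (hint : Integrable (llr Q P) Q) {A : Set Ω} (hA : MeasurableSet A) :
    Q.real A * Real.log (Q.real A / P.real A) + Q.real Aᶜ * Real.log (Q.real Aᶜ / P.real Aᶜ)
      ≤ ∫ ω, llr Q P ω ∂Q := by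
  rw [← integral_add_compl hA hint]
  exact add_le_add (mul_log_div_le_setIntegral_llr hQP hint hA)
    (mul_log_div_le_setIntegral_llr hQP hint hA.compl)

lemma neg_log_two_sub_mul_log_le_integral_llr [IsProbabilityMeasure P] [IsProbabilityMeasure Q]
    (hQP : Q ≪ P) (hint : Integrable (llr Q P) Q) {A : Set Ω} (hA : MeasurableSet A) :
    -Real.log 2 - Q.real A * Real.log (P.real A) ≤ ∫ ω, llr Q P ω ∂Q := by
  have hPQ_zero : ∀ {S : Set Ω}, P.real S = 0 → Q.real S = 0 := fun h => by
    rw [measureReal_eq_zero_iff] at h ⊢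
    exact hQP h
  have h_event : Q.real A * Real.log (Q.real A) - Q.real A * Real.log (P.real A)
      = Q.real A * Real.log (Q.real A / P.real A) := by
    rcases eq_or_ne (Q.real A) 0 with hq | hq
    · simp [hq]
    · rw [Real.log_div hq fun hp => hq (hPQ_zero hp), mul_sub]
  have h_compl : Q.real Aᶜ * Real.log (Q.real Aᶜ)
      ≤ Q.real Aᶜ * Real.log (Q.real Aᶜ / P.real Aᶜ) := by
    rcases eq_or_ne (Q.real Aᶜ) 0 with hq | hq
    · simp [hq]
    have hp : 0 < P.real Aᶜ := measureReal_nonneg.lt_of_ne' fun hp => hq (hPQ_zero hp)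
    have hq_pos : 0 < Q.real Aᶜ := measureReal_nonneg.lt_of_ne' hq
    gcongr
    exact le_div_self hq_pos.le hp measureReal_le_one
  have h_binEntropy : Q.real A * Real.log (Q.real A) + Q.real Aᶜ * Real.log (Q.real Aᶜ)
      = -Real.binEntropy (Q.real A) := by
    rw [probReal_compl_eq_one_sub hA, Real.binEntropy, Real.log_inv, Real.log_inv]
    ring
  linarith [Real.binEntropy_le_log_two (p := Q.real A),
    mul_log_div_add_mul_log_div_compl_le_integral_llr hQP hint hA]

lemma neg_integral_llr_add_log_two_div_le_log_measureReal [IsProbabilityMeasure P]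
    [IsProbabilityMeasure Q] (hQP : Q ≪ P) (hint : Integrable (llr Q P) Q) {A : Set Ω}
    (hA : MeasurableSet A) (hQA : 0 < Q.real A) :
    -((∫ ω, llr Q P ω ∂Q) + Real.log 2) / Q.real A ≤ Real.log (P.real A) := by
  rw [div_le_iff₀ hQA]
  linarith [neg_log_two_sub_mul_log_le_integral_llr hQP hint hA]

end MeasureTheory

lemma EReal.neg_limsup_le_liminf_of_le_neg_add_div {ι : Type*} {l : Filter ι} [l.NeBot]
    {a b ε q : ι → ℝ} (hε : Tendsto ε l (𝓝 0)) (hq : Tendsto q l (𝓝 1))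
    (h : ∀ᶠ i in l, -(a i + ε i) / q i ≤ b i) :
    -limsup (fun i => (a i : EReal)) l ≤ liminf (fun i => (b i : EReal)) l := by
  rw [EReal.neg_le]
  refine EReal.le_of_forall_lt_iff_le.1 fun M hM => ?_
  rw [EReal.neg_le, ← EReal.coe_neg]
  have ha : ∀ᶠ i in l, a i < M := by
    filter_upwards [eventually_lt_of_limsup_lt hM] with i hi
    exact_mod_cast hi
  have h_lim : Tendsto (fun i => -(M + ε i) / q i) l (𝓝 (-M)) := by
    rw [show -M = -(M + 0) / 1 by simp]
    exact (tendsto_const_nhds.add hε).neg.div hq one_ne_zero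
  calc ((-M : ℝ) : EReal)
      = liminf (fun i => ((-(M + ε i) / q i : ℝ) : EReal)) l :=
        ((EReal.tendsto_coe.2 h_lim).liminf_eq).symm
    _ ≤ liminf (fun i => (b i : EReal)) l := by
        refine liminf_le_liminf ?_
        filter_upwards [ha, h, hq.eventually (eventually_gt_nhds one_pos)] with i hai hi hqi
        exact EReal.coe_le_coe_iff.2 (le_trans (by gcongr) hi)

theorem stmt17 {Ω : Type*} [MeasurableSpace Ω] :
    (∀ (P Q : Measure Ω), IsProbabilityMeasure P → IsProbabilityMeasure Q →
      Q ≪ P →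
      Integrable (fun ω => Real.log ((Q.rnDeriv P ω).toReal)) Q →
      ∀ A : Set Ω, MeasurableSet A → (1 / 2 : ℝ) ≤ (Q A).toReal →
        -((∫ ω, Real.log ((Q.rnDeriv P ω).toReal) ∂Q) + Real.log 2) / (Q A).toReal ≤
          Real.log ((P A).toReal)) ∧
    (∀ (P Q : ℕ → Measure Ω) (A : ℕ → Set Ω),
      (∀ n, IsProbabilityMeasure (P n)) → (∀ n, IsProbabilityMeasure (Q n)) →
      (∀ n, Q n ≪ P n) →
      (∀ n, Integrable (fun ω => Real.log (((Q n).rnDeriv (P n) ω).toReal)) (Q n)) →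
      (∀ n, MeasurableSet (A n)) →
      Tendsto (fun n => ((Q n) (A n)).toReal) atTop (nhds 1) →
      -(limsup (fun n : ℕ =>
          (((1 / (n : ℝ)) *
            ∫ ω, Real.log (((Q n).rnDeriv (P n) ω).toReal) ∂(Q n) : ℝ) : EReal)) atTop) ≤
        liminf (fun n : ℕ =>
          (((1 / (n : ℝ)) * Real.log (((P n) (A n)).toReal) : ℝ) : EReal)) atTop) := by
  refine ⟨fun P Q _ _ hQP hint A hA hhalf => ?_, fun P Q A hP hQ hQP hint hA hQA => ?_⟩
  · exact neg_integral_llr_add_log_two_div_le_log_measureReal hQP hint hA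
      (one_half_pos.trans_le hhalf)
  · have h_log_two : Tendsto (fun n : ℕ => 1 / (n : ℝ) * Real.log 2) atTop (𝓝 0) := by
      simpa using tendsto_one_div_atTop_nhds_zero_nat.mul_const (Real.log 2)
    refine EReal.neg_limsup_le_liminf_of_le_neg_add_div h_log_two hQA ?_
    filter_upwards [hQA.eventually (eventually_gt_nhds one_pos)] with n hQA_pos
    have := hP n
    have := hQ n
    have h_event := neg_integral_llr_add_log_two_div_le_log_measureReal (hQP n) (hint n) (hA n)
      hQA_pos
    calc _ = 1 / (n : ℝ) *
          (-((∫ ω, llr (Q n) (P n) ω ∂(Q n)) + Real.log 2) / (Q n).real (A n)) := by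
          simp only [llr_def, measureReal_def]
          ring
      _ ≤ _ := mul_le_mul_of_nonneg_left h_event (by positivity)
end
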